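/- For every real number s and every positive integer x, M_{x²}(s) = 2·M_{x}(s) − ∑_{i=1}^{x} ∑_{j=1}^{x} (μ(i)·μ(j)/(i·j)^s) · H_{⌊x²/(i·j)⌋}(s). -/

import Mathlib

/-!
Write `a(n) = μ(n)/n^s`. As `a` is the Dirichlet inverse of the completely multiplicative
`n ↦ n^(-s)`, we have `∑_{b ≤ y} a(b) H_{⌊y/b⌋}(s) = 1` for every `y ≥ 1`. Hence summing
`a(i) a(j) H_{⌊N/(ij)⌋}(s)` over the lattice points `ij ≤ N = x²`, inner sum first, gives `M_N(s)`.
Dirichlet's hyperbola method splits this region into the parts `i ≤ x` and `j ≤ x`; each of them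
contributes `M_x(s)` by the same identity, and they overlap in the square `[1, x]²`.
-/

open Finset ArithmeticFunction

/-- Generalized oscillatory number in power `s`: `M_n(s) = ∑_{k=1}^{n} μ(k)/k^s`. -/
noncomputable def Mgen (s : ℝ) (n : ℕ) : ℝ :=
  ∑ k ∈ Finset.Icc 1 n, (moebius k : ℝ) / (k : ℝ) ^ s

/-- Generalized harmonic number in power `s`: `H_n(s) = ∑_{k=1}^{n} 1/k^s`. -/
noncomputable def Hgen (s : ℝ) (n : ℕ) : ℝ :=
  ∑ k ∈ Finset.Icc 1 n, 1 / (k : ℝ) ^ s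

def hyperbolaPoints (N : ℕ) : Finset (ℕ × ℕ) :=
  {p ∈ Ioc 0 N ×ˢ Ioc 0 N | p.1 * p.2 ≤ N}

lemma mem_hyperbolaPoints {N : ℕ} {p : ℕ × ℕ} :
    p ∈ hyperbolaPoints N ↔ 0 < p.1 ∧ 0 < p.2 ∧ p.1 * p.2 ≤ N := by
  obtain ⟨i, j⟩ := p
  simp only [hyperbolaPoints, mem_filter, mem_product, mem_Ioc]
  constructor
  · rintro ⟨⟨⟨hi, -⟩, hj, -⟩, hij⟩
    exact ⟨hi, hj, hij⟩
  · rintro ⟨hi, hj, hij⟩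
    exact ⟨⟨⟨hi, (Nat.le_mul_of_pos_right i hj).trans hij⟩, hj,
      (Nat.le_mul_of_pos_left j hi).trans hij⟩, hij⟩

section Hyperbola

variable {M : Type*}

lemma sum_hyperbolaPoints_filter_fst_le [AddCommMonoid M] (g : ℕ → ℕ → M) (N x : ℕ) :
    ∑ p ∈ hyperbolaPoints N with p.1 ≤ x, g p.1 p.2 =
      ∑ i ∈ Ioc 0 x, ∑ j ∈ Ioc 0 (N / i), g i j :=
  sum_finset_product' _ _ _ fun ⟨i, j⟩ => by
    simp only [mem_filter, mem_hyperbolaPoints, mem_Ioc]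
    constructor
    · rintro ⟨⟨hi, hj, hij⟩, hix⟩
      exact ⟨⟨hi, hix⟩, hj, (Nat.le_div_iff_mul_le hi).2 (by rwa [mul_comm])⟩
    · rintro ⟨⟨hi, hix⟩, hj, hjN⟩
      exact ⟨⟨hi, hj, by rw [mul_comm]; exact (Nat.le_div_iff_mul_le hi).1 hjN⟩, hix⟩

lemma sum_hyperbolaPoints_filter_snd_le [AddCommMonoid M] (g : ℕ → ℕ → M) (N x : ℕ) :
    ∑ p ∈ hyperbolaPoints N with p.2 ≤ x, g p.1 p.2 =
      ∑ j ∈ Ioc 0 x, ∑ i ∈ Ioc 0 (N / j), g i j :=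
  sum_finset_product_right' _ _ _ fun ⟨i, j⟩ => by
    simp only [mem_filter, mem_hyperbolaPoints, mem_Ioc]
    constructor
    · rintro ⟨⟨hi, hj, hij⟩, hjx⟩
      exact ⟨⟨hj, hjx⟩, hi, (Nat.le_div_iff_mul_le hj).2 hij⟩
    · rintro ⟨⟨hj, hjx⟩, hi, hiN⟩
      exact ⟨⟨hi, hj, (Nat.le_div_iff_mul_le hj).1 hiN⟩, hjx⟩

lemma sum_hyperbolaPoints [AddCommMonoid M] (g : ℕ → ℕ → M) (N : ℕ) :
    ∑ p ∈ hyperbolaPoints N, g p.1 p.2 = ∑ i ∈ Ioc 0 N, ∑ j ∈ Ioc 0 (N / i), g i j := by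
  rw [← sum_hyperbolaPoints_filter_fst_le, filter_true_of_mem]
  intro p hp
  rw [mem_hyperbolaPoints] at hp
  exact (Nat.le_mul_of_pos_right p.1 hp.2.1).trans hp.2.2

/-- Dirichlet's hyperbola method. -/
theorem sum_Ioc_sum_Ioc_div_eq_hyperbola [AddCommGroup M] (g : ℕ → ℕ → M) (N : ℕ) :
    ∑ i ∈ Ioc 0 N, ∑ j ∈ Ioc 0 (N / i), g i j =
      ∑ i ∈ Ioc 0 N.sqrt, ∑ j ∈ Ioc 0 (N / i), g i j +
        ∑ j ∈ Ioc 0 N.sqrt, ∑ i ∈ Ioc 0 (N / j), g i j -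
        ∑ i ∈ Ioc 0 N.sqrt, ∑ j ∈ Ioc 0 N.sqrt, g i j := by
  set x := N.sqrt
  have hcover : hyperbolaPoints N =
      {p ∈ hyperbolaPoints N | p.1 ≤ x} ∪ {p ∈ hyperbolaPoints N | p.2 ≤ x} := by
    rw [← filter_or, filter_true_of_mem]
    intro p hp
    by_contra! h
    have hle : (x + 1) * (x + 1) ≤ p.1 * p.2 := Nat.mul_le_mul h.1 h.2
    have hlt : N < (x + 1) * (x + 1) := Nat.lt_succ_sqrt N
    exact absurd (mem_hyperbolaPoints.1 hp).2.2 (by omega)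
  have hsquare : {p ∈ hyperbolaPoints N | p.1 ≤ x} ∩ {p ∈ hyperbolaPoints N | p.2 ≤ x} =
      Ioc 0 x ×ˢ Ioc 0 x := by
    ext ⟨i, j⟩
    simp only [← filter_and, mem_filter, mem_hyperbolaPoints, mem_product, mem_Ioc]
    constructor
    · rintro ⟨⟨hi, hj, -⟩, hix, hjx⟩
      exact ⟨⟨hi, hix⟩, hj, hjx⟩
    · rintro ⟨⟨hi, hix⟩, hj, hjx⟩
      exact ⟨⟨hi, hj, (Nat.mul_le_mul hix hjx).trans (Nat.sqrt_le N)⟩, hix, hjx⟩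
  rw [← sum_hyperbolaPoints, ← sum_hyperbolaPoints_filter_fst_le g N x,
    ← sum_hyperbolaPoints_filter_snd_le g N x, ← sum_product' (f := g), ← hsquare,
    ← sum_union_inter, ← hcover, add_sub_cancel_right]

end Hyperbola

namespace ArithmeticFunction

variable {R : Type*}

theorem pmul_mul_pmul_of_map_mul [CommSemiring R] {w : ArithmeticFunction R}
    (hw : ∀ m n, w (m * n) = w m * w n) (f g : ArithmeticFunction R) :
    f.pmul w * g.pmul w = (f * g).pmul w := by
  ext n
  simp only [mul_apply, pmul_apply, sum_mul]
  refine sum_congr rfl fun p hp => ?_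
  rw [← (Nat.mem_divisorsAntidiagonal.1 hp).1, hw]
  ring

theorem one_pmul_of_map_one [MulZeroOneClass R] {w : ArithmeticFunction R} (hw : w 1 = 1) :
    (1 : ArithmeticFunction R).pmul w = 1 := by
  ext n
  rw [pmul_apply, one_apply]
  split_ifs with hn
  · rw [hn, hw, one_mul]
  · rw [zero_mul]

theorem moebius_pmul_mul_of_map_mul [CommRing R] {w : ArithmeticFunction R}
    (hw : ∀ m n, w (m * n) = w m * w n) (hw₁ : w 1 = 1) :
    (moebius : ArithmeticFunction R).pmul w * w = 1 := by
  rw [← one_pmul_of_map_one hw₁, ← coe_moebius_mul_coe_zeta (R := R),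
    ← pmul_mul_pmul_of_map_mul hw, zeta_pmul]

theorem sum_Ioc_moebius_pmul_mul_sum_Ioc_div [CommRing R] {w : ArithmeticFunction R}
    (hw : ∀ m n, w (m * n) = w m * w n) (hw₁ : w 1 = 1) {y : ℕ} (hy : 1 ≤ y) :
    ∑ b ∈ Ioc 0 y, (moebius : ArithmeticFunction R).pmul w b * ∑ c ∈ Ioc 0 (y / b), w c = 1 := by
  rw [← sum_Ioc_mul_eq_sum_sum, moebius_pmul_mul_of_map_mul hw hw₁,
    sum_eq_single_of_mem 1 (by simp [hy]) fun n _ hn => one_apply_ne hn, one_one]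

end ArithmeticFunction

/-- `n ↦ n ^ (-s)`; the value at `0` is forced to be `0`, as `(0 : ℝ) ^ (0 : ℝ) = 1`. -/
noncomputable def invRpow (s : ℝ) : ArithmeticFunction ℝ :=
  ⟨fun n => if n = 0 then 0 else 1 / (n : ℝ) ^ s, if_pos rfl⟩

lemma invRpow_apply (s : ℝ) {n : ℕ} (hn : n ≠ 0) : invRpow s n = 1 / (n : ℝ) ^ s :=
  if_neg hn

lemma invRpow_mul (s : ℝ) (m n : ℕ) : invRpow s (m * n) = invRpow s m * invRpow s n := by
  rcases eq_or_ne m 0 with rfl | hm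
  · simp [invRpow]
  rcases eq_or_ne n 0 with rfl | hn
  · simp [invRpow]
  rw [invRpow_apply s hm, invRpow_apply s hn, invRpow_apply s (mul_ne_zero hm hn), Nat.cast_mul,
    Real.mul_rpow (Nat.cast_nonneg m) (Nat.cast_nonneg n), one_div_mul_one_div]

lemma invRpow_one (s : ℝ) : invRpow s 1 = 1 := by
  simp [invRpow_apply s one_ne_zero]

lemma Icc_one_eq_Ioc_zero (n : ℕ) : Icc 1 n = Ioc 0 n :=
  Icc_succ_left_eq_Ioc 0 n

lemma Hgen_eq_sum_Ioc_invRpow (s : ℝ) (n : ℕ) : Hgen s n = ∑ k ∈ Ioc 0 n, invRpow s k := by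
  rw [Hgen, Icc_one_eq_Ioc_zero]
  exact sum_congr rfl fun k hk => (invRpow_apply s (mem_Ioc.1 hk).1.ne').symm

noncomputable def moebiusDivRpow (s : ℝ) : ArithmeticFunction ℝ :=
  (moebius : ArithmeticFunction ℝ).pmul (invRpow s)

lemma moebiusDivRpow_apply (s : ℝ) (n : ℕ) :
    moebiusDivRpow s n = (moebius n : ℝ) / (n : ℝ) ^ s := by
  rcases eq_or_ne n 0 with rfl | hn
  · simp
  rw [moebiusDivRpow, pmul_apply, intCoe_apply, invRpow_apply s hn, mul_one_div]

lemma Mgen_eq_sum_Ioc (s : ℝ) (n : ℕ) :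
    Mgen s n = ∑ k ∈ Ioc 0 n, moebiusDivRpow s k := by
  simp only [Mgen, Icc_one_eq_Ioc_zero, moebiusDivRpow_apply]

lemma sum_Ioc_moebiusDivRpow_mul_Hgen_div (s : ℝ) {y : ℕ} (hy : 1 ≤ y) :
    ∑ b ∈ Ioc 0 y, moebiusDivRpow s b * Hgen s (y / b) = 1 := by
  simp only [Hgen_eq_sum_Ioc_invRpow]
  exact sum_Ioc_moebius_pmul_mul_sum_Ioc_div (invRpow_mul s) (invRpow_one s) hy

lemma sum_Ioc_div_moebiusDivRpow_mul_Hgen_div_mul (s : ℝ) {N i : ℕ} (hi : 0 < i) (hiN : i ≤ N) :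
    ∑ j ∈ Ioc 0 (N / i), moebiusDivRpow s i * moebiusDivRpow s j * Hgen s (N / (i * j)) =
      moebiusDivRpow s i := by
  simp only [mul_assoc, ← Nat.div_div_eq_div_mul, ← mul_sum]
  rw [sum_Ioc_moebiusDivRpow_mul_Hgen_div s ((Nat.one_le_div_iff hi).2 hiN), mul_one]

lemma moebius_mul_moebius_div_mul_rpow (s : ℝ) (i j : ℕ) :
    (moebius i : ℝ) * (moebius j : ℝ) / ((i : ℝ) * (j : ℝ)) ^ s =
      moebiusDivRpow s i * moebiusDivRpow s j := by
  rw [moebiusDivRpow_apply, moebiusDivRpow_apply, Real.mul_rpow (Nat.cast_nonneg i)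
    (Nat.cast_nonneg j), mul_div_mul_comm]

theorem stmt_11_general (s : ℝ) (x : ℕ) :
    Mgen s (x ^ 2) = 2 * Mgen s x -
      ∑ i ∈ Finset.Icc 1 x, ∑ j ∈ Finset.Icc 1 x,
        ((moebius i : ℝ) * (moebius j : ℝ) / ((i : ℝ) * (j : ℝ)) ^ s) *
          Hgen s (x ^ 2 / (i * j)) := by
  set a := moebiusDivRpow s
  have hx : x ≤ x ^ 2 := Nat.le_self_pow two_ne_zero x
  have hrow : ∀ {N i : ℕ}, 0 < i → i ≤ N →
      ∑ j ∈ Ioc 0 (N / i), a i * a j * Hgen s (N / (i * j)) = a i :=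
    sum_Ioc_div_moebiusDivRpow_mul_Hgen_div_mul s
  have hcol : ∀ {N j : ℕ}, 0 < j → j ≤ N →
      ∑ i ∈ Ioc 0 (N / j), a i * a j * Hgen s (N / (i * j)) = a j := fun {N j} hj hjN => by
    simpa only [mul_comm j, mul_comm (a j)] using hrow hj hjN
  have hyperbola := sum_Ioc_sum_Ioc_div_eq_hyperbola
    (fun i j => a i * a j * Hgen s (x ^ 2 / (i * j))) (x ^ 2)
  rw [Nat.sqrt_eq', sum_congr rfl fun i hi => hrow (mem_Ioc.1 hi).1 (mem_Ioc.1 hi).2,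
    sum_congr rfl fun i hi => hrow (mem_Ioc.1 hi).1 ((mem_Ioc.1 hi).2.trans hx),
    sum_congr rfl fun j hj => hcol (mem_Ioc.1 hj).1 ((mem_Ioc.1 hj).2.trans hx)] at hyperbola
  simp only [Mgen_eq_sum_Ioc, Icc_one_eq_Ioc_zero, moebius_mul_moebius_div_mul_rpow]
  rw [hyperbola]
  ring

theorem stmt_11 (s : ℝ) (x : ℕ) (hx : 0 < x) :
    Mgen s (x ^ 2) = 2 * Mgen s x -
      ∑ i ∈ Finset.Icc 1 x, ∑ j ∈ Finset.Icc 1 x,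
        ((moebius i : ℝ) * (moebius j : ℝ) / ((i : ℝ) * (j : ℝ)) ^ s) *
          Hgen s (x ^ 2 / (i * j)) :=
  stmt_11_general s x
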